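/- Let v_1,...,v_n be the vertices of an (n−1)-simplex Δ ⊂ ℝ^{n-1} and ℓ a linear functional. Then for every k ≥ 1, ∫_Δ ℓ(x)^k dx = (Vol(Δ)/C(n−1+k, k))·h_k(ℓ(v_1),...,ℓ(v_n)), where h_k is the complete homogeneous symmetric polynomial of degree k. -/

import Mathlib

/-!
Write `m = n - 1`. The map `t ↦ ∑ λᵢ(t) vᵢ`, with barycentric coordinates `λ(t) = (t, 1 - ∑ t)`,
is an affine bijection from the corner simplex `T = {t ≥ 0, ∑ t ≤ 1} ⊆ ℝᵐ` onto `Δ`. By the change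
of variables formula, `∫_Δ g = m! Vol(Δ) ∫_T g(∑ λᵢ vᵢ)`: the Jacobian is constant, and testing
with `g = 1` identifies it, since `Vol(T) = 1/m!`. On `T`, `ℓ(∑ λᵢ vᵢ)^k = (∑ λᵢ ℓ(vᵢ))^k`
expands by the multinomial theorem into monomials `∏ λᵢ^qᵢ`, whose integrals are the Dirichlet
integrals `∏ qᵢ! / (m + k)!`; these follow by induction on `m`, slicing off one coordinate and
using the Beta integral `∫₀^L x^a (L - x)^b dx = a! b! L^(a+b+1) / (a+b+1)!`. The factorials
cancel the multinomial coefficients, leaving `k! m! / (m + k)! = 1 / C(m + k, k)`.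
-/

open MeasureTheory
open scoped Nat

theorem integral_pow_mul_sub_pow (a b : ℕ) (L : ℝ) :
    ∫ x in (0 : ℝ)..L, x ^ a * (L - x) ^ b = a ! * b ! / (a + b + 1)! * L ^ (a + b + 1) := by
  induction b generalizing a with
  | zero =>
    simp only [pow_zero, mul_one, integral_pow, Nat.factorial_succ, Nat.factorial_zero, add_zero]
    rw [zero_pow a.succ_ne_zero]
    push_cast
    field_simp
    ring
  | succ b ih =>
    have hu : ∀ x ∈ Set.uIcc 0 L, HasDerivAt (fun x : ℝ => (L - x) ^ (b + 1))
        (-((b + 1 : ℝ) * (L - x) ^ b)) x := fun x _ =>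
      (((hasDerivAt_id' x).const_sub L).fun_pow (b + 1)).congr_deriv (by push_cast; ring)
    have hv : ∀ x ∈ Set.uIcc 0 L, HasDerivAt (fun x : ℝ => x ^ (a + 1) / (a + 1)) (x ^ a) x :=
      fun x _ => ((hasDerivAt_pow (a + 1) x).div_const ((a : ℝ) + 1)).congr_deriv
        (by push_cast; field_simp)
    have hparts := intervalIntegral.integral_mul_deriv_eq_deriv_mul hu hv
      ((by fun_prop : Continuous fun x : ℝ => -((b + 1 : ℝ) * (L - x) ^ b)).intervalIntegrable 0 L)
      ((by fun_prop : Continuous fun x : ℝ => x ^ a).intervalIntegrable 0 L)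
    have hrec : ∫ x in (0 : ℝ)..L, x ^ a * (L - x) ^ (b + 1)
        = (b + 1) / (a + 1) * ∫ x in (0 : ℝ)..L, x ^ (a + 1) * (L - x) ^ b := by
      simp only [sub_self, zero_pow (Nat.succ_ne_zero _), zero_mul, zero_div, mul_zero,
        sub_zero, neg_mul, intervalIntegral.integral_neg, sub_neg_eq_add, zero_add] at hparts
      rw [← intervalIntegral.integral_const_mul]
      convert hparts using 1 <;> refine intervalIntegral.integral_congr fun x _ => ?_ <;> ring
    rw [hrec, ih, show a + 1 + b + 1 = a + (b + 1) + 1 by ring]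
    simp only [Nat.factorial_succ]
    push_cast
    field_simp

def cornerSimplex (m : ℕ) : Set (Fin m → ℝ) := {t | (∀ i, 0 ≤ t i) ∧ ∑ i, t i ≤ 1}

section CornerSimplex

variable {m : ℕ}

theorem isClosed_cornerSimplex : IsClosed (cornerSimplex m) := by
  simp only [cornerSimplex, Set.ofPred_and, Set.ofPred_forall]
  exact (isClosed_iInter fun i => isClosed_le continuous_const (continuous_apply i)).inter
    (isClosed_le (by fun_prop) continuous_const)

theorem isCompact_cornerSimplex : IsCompact (cornerSimplex m) := by
  refine (isCompact_Icc (a := 0) (b := 1)).of_isClosed_subset isClosed_cornerSimplex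
    fun t ht => ⟨ht.1, fun i => ?_⟩
  exact (Finset.single_le_sum (fun j _ => ht.1 j) (Finset.mem_univ i)).trans ht.2

theorem measurableSet_cornerSimplex : MeasurableSet (cornerSimplex m) :=
  isClosed_cornerSimplex.measurableSet

theorem cons_mem_cornerSimplex_iff {s : ℝ} {t : Fin m → ℝ} :
    Fin.cons s t ∈ cornerSimplex (m + 1) ↔
      t ∈ cornerSimplex m ∧ s ∈ Set.Icc 0 (1 - ∑ i, t i) := by
  simp only [cornerSimplex, Set.mem_ofPred_eq, Fin.forall_fin_succ, Fin.cons_zero, Fin.cons_succ,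
    Fin.sum_univ_succ, Set.mem_Icc]
  constructor
  · rintro ⟨⟨hs, ht⟩, hsum⟩
    exact ⟨⟨ht, by linarith⟩, hs, by linarith⟩
  · rintro ⟨⟨ht, -⟩, hs, hsum⟩
    exact ⟨⟨hs, ht⟩, by linarith⟩

theorem setIntegral_cornerSimplex_succ {E : Type*} [NormedAddCommGroup E] [NormedSpace ℝ E]
    {g : (Fin (m + 1) → ℝ) → E} (hg : IntegrableOn g (cornerSimplex (m + 1))) :
    ∫ t in cornerSimplex (m + 1), g t
      = ∫ t in cornerSimplex m, ∫ s in (0 : ℝ)..(1 - ∑ i, t i), g (Fin.cons s t) := by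
  let e := (MeasurableEquiv.piFinSuccAbove (fun _ : Fin (m + 1) => ℝ) 0).symm
  have he : MeasurePreserving e (volume.prod volume) volume :=
    (volume_preserving_piFinSuccAbove (fun _ : Fin (m + 1) => ℝ) 0).symm
  have he_apply : ∀ s t, e (s, t) = Fin.cons s t := fun s t => by
    simp [e, MeasurableEquiv.piFinSuccAbove_symm_apply, Fin.consEquiv]
  set G := (cornerSimplex (m + 1)).indicator g
  have hG : Integrable (G ∘ e) (volume.prod volume) :=
    (he.integrable_comp_emb e.measurableEmbedding).mpr
      ((integrable_indicator_iff measurableSet_cornerSimplex).mpr hg)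
  have hslice : ∀ t, ∫ s, G (e (s, t)) = (cornerSimplex m).indicator
      (fun t => ∫ s in (0 : ℝ)..(1 - ∑ i, t i), g (Fin.cons s t)) t := by
    intro t
    by_cases ht : t ∈ cornerSimplex m
    · have hG_slice : ∀ s, G (e (s, t))
          = (Set.Icc 0 (1 - ∑ i, t i)).indicator (fun s => g (Fin.cons s t)) s := fun s => by
        simp only [G, he_apply, Set.indicator, cons_mem_cornerSimplex_iff, ht, true_and]
      simp only [hG_slice, Set.indicator_of_mem ht, integral_indicator measurableSet_Icc,
        integral_Icc_eq_integral_Ioc, intervalIntegral.integral_of_le (sub_nonneg.mpr ht.2)]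
    · simp [G, he_apply, Set.indicator, cons_mem_cornerSimplex_iff, ht]
  calc ∫ t in cornerSimplex (m + 1), g t = ∫ p, G (e p) ∂(volume.prod volume) := by
        rw [← integral_indicator measurableSet_cornerSimplex,
          he.integral_comp e.measurableEmbedding]
    _ = ∫ t, ∫ s, G (e (s, t)) := integral_prod_symm _ hG
    _ = _ := by simp only [hslice, integral_indicator measurableSet_cornerSimplex]

end CornerSimplex

theorem setIntegral_cornerSimplex_prod_pow_mul_pow (m : ℕ) (q : Fin m → ℕ) (r : ℕ) :
    ∫ t in cornerSimplex m, (∏ i, t i ^ q i) * (1 - ∑ i, t i) ^ r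
      = (∏ i, ((q i)! : ℝ)) * r ! / (m + ∑ i, q i + r)! := by
  induction m generalizing r with
  | zero =>
    have : cornerSimplex 0 = Set.univ := by simp [cornerSimplex]
    simp [this, measureReal_def, volume_pi, Nat.factorial_ne_zero]
  | succ m ih =>
    have hinner : ∀ t : Fin m → ℝ, ∫ s in (0 : ℝ)..(1 - ∑ i, t i),
          (∏ i, (Fin.cons s t : Fin (m + 1) → ℝ) i ^ q i)
            * (1 - ∑ i, (Fin.cons s t : Fin (m + 1) → ℝ) i) ^ r
        = (q 0)! * r ! / (q 0 + r + 1)!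
            * ((∏ i, t i ^ q i.succ) * (1 - ∑ i, t i) ^ (q 0 + r + 1)) := by
      intro t
      simp only [Fin.prod_univ_succ, Fin.sum_univ_succ, Fin.cons_zero, Fin.cons_succ]
      calc _ = (∏ i, t i ^ q i.succ) * ∫ s in (0 : ℝ)..(1 - ∑ i, t i),
              s ^ q 0 * ((1 - ∑ i, t i) - s) ^ r := by
            rw [← intervalIntegral.integral_const_mul]
            exact intervalIntegral.integral_congr fun s _ => by ring
        _ = _ := by rw [integral_pow_mul_sub_pow]; ring
    rw [setIntegral_cornerSimplex_succ
      ((by fun_prop : Continuous _).continuousOn.integrableOn_compact isCompact_cornerSimplex)]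
    simp only [hinner]
    rw [integral_const_mul, ih, Fin.prod_univ_succ, Fin.sum_univ_succ,
      show m + ∑ i : Fin m, q i.succ + (q 0 + r + 1)
        = m + 1 + (q 0 + ∑ i : Fin m, q i.succ) + r by ring]
    field_simp

/-- Barycentric coordinates on `cornerSimplex m`, whose vertices are ordered `e₀, …, eₘ₋₁, 0`. -/
def baryCoord {m : ℕ} (t : Fin m → ℝ) : Fin (m + 1) → ℝ := Fin.snoc t (1 - ∑ i, t i)

section BaryCoord

variable {m : ℕ}

@[fun_prop]
theorem continuous_baryCoord : Continuous (baryCoord (m := m)) := by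
  unfold baryCoord
  fun_prop

theorem sum_baryCoord (t : Fin m → ℝ) : ∑ i, baryCoord t i = 1 := by
  simp [baryCoord, Fin.sum_univ_castSucc]

theorem image_baryCoord_cornerSimplex :
    baryCoord '' cornerSimplex m = stdSimplex ℝ (Fin (m + 1)) := by
  ext x
  constructor
  · rintro ⟨t, ⟨ht, hsum⟩, rfl⟩
    refine ⟨fun i => Fin.lastCases ?_ (fun j => ?_) i, sum_baryCoord t⟩
    · simpa [baryCoord] using hsum
    · simpa [baryCoord] using ht j
  · rintro ⟨hx, hsum⟩
    rw [Fin.sum_univ_castSucc] at hsum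
    refine ⟨Fin.init x, ⟨fun i => hx _, ?_⟩, ?_⟩
    · simp only [Fin.init]
      linarith [hx (Fin.last m)]
    · simp only [baryCoord, Fin.init]
      rw [← eq_sub_of_add_eq' hsum]
      exact Fin.snoc_init_self x

theorem setIntegral_cornerSimplex_prod_baryCoord_pow (q : Fin (m + 1) → ℕ) :
    ∫ t in cornerSimplex m, ∏ i, baryCoord t i ^ q i
      = (∏ i, ((q i)! : ℝ)) / (m + ∑ i, q i)! := by
  simp only [Fin.prod_univ_castSucc, Fin.sum_univ_castSucc, baryCoord, Fin.snoc_castSucc,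
    Fin.snoc_last]
  rw [setIntegral_cornerSimplex_prod_pow_mul_pow, add_assoc]

theorem setIntegral_cornerSimplex_sum_baryCoord_mul_pow (a : Fin (m + 1) → ℝ) (k : ℕ) :
    ∫ t in cornerSimplex m, (∑ i, baryCoord t i * a i) ^ k
      = k ! / (m + k)! * ∑ q ∈ Finset.Nat.antidiagonalTuple (m + 1) k, ∏ i, a i ^ q i := by
  classical
  simp only [Finset.sum_pow_eq_sum_piAntidiag, mul_pow, Finset.prod_mul_distrib,
    Finset.piAntidiag_univ_fin_eq_antidiagonalTuple, Finset.mul_sum]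
  rw [integral_finsetSum]
  · refine Finset.sum_congr rfl fun q hq => ?_
    rw [Finset.Nat.mem_antidiagonalTuple] at hq
    have hmultinomial := Nat.multinomial_spec Finset.univ q
    rw [hq] at hmultinomial
    simp_rw [mul_comm (∏ i, baryCoord _ i ^ q i), ← mul_assoc]
    rw [integral_const_mul, setIntegral_cornerSimplex_prod_baryCoord_pow, hq, ← hmultinomial]
    push_cast
    field_simp
  · exact fun q _ =>
      (by fun_prop : Continuous _).continuousOn.integrableOn_compact isCompact_cornerSimplex

end BaryCoord

theorem convexHull_range_eq_image_stdSimplex {R ι E : Type*} [Field R] [LinearOrder R]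
    [IsStrictOrderedRing R] [Fintype ι] [DecidableEq ι] [AddCommGroup E] [Module R E]
    (w : ι → E) :
    convexHull R (Set.range w) = Fintype.linearCombination R w '' stdSimplex R ι := by
  rw [← convexHull_rangle_single_eq_stdSimplex, LinearMap.image_convexHull, ← Set.range_comp]
  congr 2 with i
  simp

theorem AffineIndependent.linearIndependent_sub_last {k V : Type*} [Ring k] [AddCommGroup V]
    [Module k V] {m : ℕ} {w : Fin (m + 1) → V} (hw : AffineIndependent k w) :
    LinearIndependent k fun i : Fin m => w i.castSucc - w (Fin.last m) :=
  ((affineIndependent_iff_linearIndependent_vsub k w (Fin.last m)).mp hw).comp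
    (fun i : Fin m => (⟨i.castSucc, (Fin.castSucc_lt_last i).ne⟩ : {x // x ≠ Fin.last m}))
    fun _ _ h => Fin.castSucc_injective m (congrArg Subtype.val h)

theorem setIntegral_image_linearMap_add {E F : Type*} [NormedAddCommGroup E] [NormedSpace ℝ E]
    [FiniteDimensional ℝ E] [MeasurableSpace E] [BorelSpace E] [NormedAddCommGroup F]
    [NormedSpace ℝ F] (μ : Measure E) [μ.IsAddHaarMeasure] {A : E →ₗ[ℝ] E}
    (hA : Function.Injective A) (c : E) {s : Set E} (hs : MeasurableSet s) (g : E → F) :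
    ∫ x in (fun x => A x + c) '' s, g x ∂μ = |LinearMap.det A| • ∫ x in s, g (A x + c) ∂μ := by
  have hderiv : ∀ x ∈ s,
      HasFDerivWithinAt (fun x => A x + c) (LinearMap.toContinuousLinearMap A) s x :=
    fun x _ => ((LinearMap.toContinuousLinearMap A).hasFDerivAt.add_const c).hasFDerivWithinAt
  rw [integral_image_eq_integral_abs_det_fderiv_smul μ hs hderiv
    (fun x _ y _ h => hA (add_right_cancel h)), integral_smul]
  simp

theorem setIntegral_convexHull_eq_smul_setIntegral_cornerSimplex {F : Type*}
    [NormedAddCommGroup F] [NormedSpace ℝ F] {m : ℕ} {w : Fin (m + 1) → Fin m → ℝ}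
    (hw : AffineIndependent ℝ w) (g : (Fin m → ℝ) → F) :
    ∫ x in convexHull ℝ (Set.range w), g x
      = (m ! * volume.real (convexHull ℝ (Set.range w))) •
          ∫ t in cornerSimplex m, g (∑ i, baryCoord t i • w i) := by
  classical
  set A := Fintype.linearCombination ℝ fun i : Fin m => w i.castSucc - w (Fin.last m)
  have hA : Function.Injective A := hw.linearIndependent_sub_last.fintypeLinearCombination_injective
  have hparam : ∀ t, A t + w (Fin.last m) = ∑ i, baryCoord t i • w i := by
    intro t
    simp only [A, Fintype.linearCombination_apply, Fin.sum_univ_castSucc, baryCoord,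
      Fin.snoc_castSucc, Fin.snoc_last, smul_sub, sub_smul, one_smul, Finset.sum_sub_distrib,
      Finset.sum_smul]
    abel
  have himage : (fun t => A t + w (Fin.last m)) '' cornerSimplex m
      = convexHull ℝ (Set.range w) := by
    rw [funext hparam, convexHull_range_eq_image_stdSimplex, ← image_baryCoord_cornerSimplex,
      Set.image_image]
    simp only [Fintype.linearCombination_apply]
  have hvol : volume.real (convexHull ℝ (Set.range w)) = |LinearMap.det A| / m ! := by
    have h := setIntegral_image_linearMap_add volume hA (w (Fin.last m))
      measurableSet_cornerSimplex fun _ => (1 : ℝ)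
    have hT := setIntegral_cornerSimplex_prod_baryCoord_pow (m := m) 0
    rw [himage] at h
    simp_all [div_eq_mul_inv]
  rw [← himage, setIntegral_image_linearMap_add volume hA _ measurableSet_cornerSimplex, himage,
    hvol]
  simp_rw [hparam]
  congr 1
  field_simp

namespace EuclideanSpace

variable {m : ℕ} {v : Fin (m + 1) → EuclideanSpace ℝ (Fin m)}

theorem setIntegral_convexHull_eq_smul_setIntegral_cornerSimplex {F : Type*}
    [NormedAddCommGroup F] [NormedSpace ℝ F] (hv : AffineIndependent ℝ v)
    (g : EuclideanSpace ℝ (Fin m) → F) :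
    ∫ x in convexHull ℝ (Set.range v), g x
      = (m ! * volume.real (convexHull ℝ (Set.range v))) •
          ∫ t in cornerSimplex m, g (∑ i, baryCoord t i • v i) := by
  let e := WithLp.linearEquiv 2 ℝ (Fin m → ℝ)
  have hpre : WithLp.toLp 2 ⁻¹' convexHull ℝ (Set.range v)
      = convexHull ℝ (Set.range (e ∘ v)) := by
    rw [Set.range_comp, ← LinearEquiv.coe_toLinearMap, ← LinearMap.image_convexHull,
      LinearEquiv.coe_toLinearMap, LinearEquiv.image_eq_preimage_symm]
    rfl
  have hev : AffineIndependent ℝ (e ∘ v) := hv.map' e.toLinearMap.toAffineMap e.injective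
  have htoLp := PiLp.volume_preserving_toLp (Fin m)
  have hemb : MeasurableEmbedding (WithLp.toLp 2 : (Fin m → ℝ) → EuclideanSpace ℝ (Fin m)) :=
    (MeasurableEquiv.toLp 2 (Fin m → ℝ)).measurableEmbedding
  rw [measureReal_def, ← htoLp.measure_preimage_emb hemb, ← measureReal_def,
    ← htoLp.setIntegral_preimage_emb hemb, hpre,
    _root_.setIntegral_convexHull_eq_smul_setIntegral_cornerSimplex hev]
  simp [e]

theorem setIntegral_convexHull_linearMap_pow (hv : AffineIndependent ℝ v)
    (ℓ : EuclideanSpace ℝ (Fin m) →ₗ[ℝ] ℝ) (k : ℕ) :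
    ∫ x in convexHull ℝ (Set.range v), ℓ x ^ k
      = volume.real (convexHull ℝ (Set.range v)) / (m + k).choose k
          * ∑ q ∈ Finset.Nat.antidiagonalTuple (m + 1) k, ∏ i, ℓ (v i) ^ q i := by
  simp only [setIntegral_convexHull_eq_smul_setIntegral_cornerSimplex hv, map_sum, map_smul,
    smul_eq_mul, setIntegral_cornerSimplex_sum_baryCoord_mul_pow]
  have hchoose : ((m + k).choose k : ℝ) * m ! * k ! = (m + k)! := by
    exact_mod_cast Nat.add_choose_mul_factorial_mul_factorial m k
  rw [← hchoose]
  field_simp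

end EuclideanSpace

theorem integral_linear_pow_over_simplex_general (n k : ℕ)
    (v : Fin n → EuclideanSpace ℝ (Fin (n - 1))) (hv : AffineIndependent ℝ v)
    (ℓ : EuclideanSpace ℝ (Fin (n - 1)) →ₗ[ℝ] ℝ) :
    (∫ x in convexHull ℝ (Set.range v), (ℓ x) ^ k)
      = ((volume (convexHull ℝ (Set.range v))).toReal / (n - 1 + k).choose k)
          * ∑ q ∈ Finset.Nat.antidiagonalTuple n k, ∏ i, ℓ (v i) ^ q i := by
  cases n with
  | zero => simp
  | succ m => exact EuclideanSpace.setIntegral_convexHull_linearMap_pow hv ℓ k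

theorem integral_linear_pow_over_simplex (n k : ℕ) (hn : 1 ≤ n) (hk : 1 ≤ k)
    (v : Fin n → EuclideanSpace ℝ (Fin (n - 1))) (hv : AffineIndependent ℝ v)
    (ℓ : EuclideanSpace ℝ (Fin (n - 1)) →ₗ[ℝ] ℝ) :
    (∫ x in convexHull ℝ (Set.range v), (ℓ x) ^ k)
      = ((volume (convexHull ℝ (Set.range v))).toReal / (n - 1 + k).choose k)
          * ∑ q ∈ Finset.Nat.antidiagonalTuple n k, ∏ i, ℓ (v i) ^ q i :=
  integral_linear_pow_over_simplex_general n k v hv ℓ
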